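/- Let A be a bounded linear operator on H. Then for every real number r ≥ 1, ber(A)^{2r} ≤ (1/4)·ber(|A|^{2r} + |A*|^{2r}) + (1/2)·ber(|A|^r · |A*|^r). -/

import Mathlib

set_option synthInstance.maxHeartbeats 1000000
set_option maxHeartbeats 1000000

open scoped NNReal
open ContinuousLinearMap

/-- The Berezin number of an operator `T`, relative to the family `k` of
(normalized reproducing kernel) vectors indexed by `Ω`. -/
noncomputable def ber {H : Type*} [NormedAddCommGroup H] [InnerProductSpace ℂ H]
    {Ω : Type*} (k : Ω → H) (T : H →L[ℂ] H) : ℝ :=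
  ⨆ lam : Ω, ‖(inner ℂ (T (k lam)) (k lam) : ℂ)‖

/-- The absolute value `|T| = (T*T)^(1/2)` of a bounded operator. -/
noncomputable def opAbs {H : Type*} [NormedAddCommGroup H] [InnerProductSpace ℂ H]
    [CompleteSpace H] (T : H →L[ℂ] H) : H →L[ℂ] H :=
  CFC.sqrt (adjoint T * T)

/-!
For a unit vector `x`, the mixed Schwarz inequality `|⟪A x, x⟫|² ≤ ⟪|A| x, x⟫ ⟪|A*| x, x⟫` and
McCarthy's inequality `⟪P x, x⟫ ^ r ≤ ⟪P ^ r x, x⟫` (`P ≥ 0`, `r ≥ 1`) give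
`|⟪A x, x⟫| ^ (2r) ≤ ⟪|A| ^ r x, x⟫ ⟪|A*| ^ r x, x⟫`. Buzano's inequality
`2 |⟪u, e⟫| |⟪e, v⟫| ≤ ‖u‖ ‖v‖ + |⟪u, v⟫|` with `u = |A| ^ r x`, `v = |A*| ^ r x`, `e = x`, followed by
`‖u‖ ‖v‖ ≤ (‖u‖² + ‖v‖²) / 2`, bounds this by the right-hand side evaluated at `x`; taking the
supremum over the normalized kernels gives the theorem.

Mixed Schwarz is proved without polar decomposition: with `u = (|A| + ε) ^ (1/2)` and `w = u⁻¹`,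
Cauchy–Schwarz applied to `⟪A x, y⟫ = ⟪u x, w A* y⟫` leaves the bound `A (|A| + ε)⁻¹ A* ≤ |A*|`,
which holds because its left side squares to at most `A A*` and the square root is operator
monotone; then `ε → 0`. McCarthy's inequality is the tangent-line bound `r s ^ (r-1) t ≤ t ^ r + (r-1) s ^ r`
passed through the functional calculus and evaluated at `s = ⟪P x, x⟫`.
-/

open scoped InnerProductSpace
open RCLike

lemma Real.mul_rpow_sub_one_mul_le {r s t : ℝ} (hr : 1 ≤ r) (hs : 0 ≤ s) (ht : 0 ≤ t) :
    r * s ^ (r - 1) * t ≤ t ^ r + (r - 1) * s ^ r := by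
  have hr0 : r ≠ 0 := by positivity
  have hamgm := Real.geom_mean_le_arith_mean2_weighted (inv_nonneg.2 (zero_le_one.trans hr))
    (sub_nonneg.2 (inv_le_one_of_one_le₀ hr)) (Real.rpow_nonneg ht r) (Real.rpow_nonneg hs r)
    (add_sub_cancel _ _)
  rw [Real.rpow_rpow_inv ht hr0, ← Real.rpow_mul hs, mul_sub, mul_one, mul_inv_cancel₀ hr0] at hamgm
  have := mul_le_mul_of_nonneg_left hamgm (zero_le_one.trans hr)
  field_simp at this
  linarith

section CStarAlgebra

variable {𝒜 : Type*} [CStarAlgebra 𝒜] [PartialOrder 𝒜] [StarOrderedRing 𝒜]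

lemma CFC.rpow_mul_rpow_self {a : 𝒜} (ha : 0 ≤ a) {r : ℝ} (hr : 0 ≤ r) :
    a ^ r * a ^ r = a ^ (2 * r) := by
  rw [← sq, ← CFC.rpow_natCast _ 2, Nat.cast_ofNat,
    CFC.rpow_rpow_of_exponent_nonneg a r 2 hr zero_le_two, mul_comm]

lemma CFC.smul_le_rpow_add_algebraMap {a : 𝒜} (ha : 0 ≤ a) {r s : ℝ} (hr : 1 ≤ r)
    (hs : 0 ≤ s) : (r * s ^ (r - 1)) • a ≤ a ^ r + algebraMap ℝ 𝒜 ((r - 1) * s ^ r) := by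
  have hcont : Continuous fun t : ℝ => t ^ r := Real.continuous_rpow_const (by linarith)
  rw [CFC.rpow_eq_cfc_real ha, ← cfc_add_const _ _ a hcont.continuousOn, ← cfc_const_mul_id ..]
  exact cfc_mono (fun t ht => Real.mul_rpow_sub_one_mul_le hr hs (spectrum_nonneg_of_nonneg ha ht))
    (continuous_const.mul continuous_id).continuousOn
    (hcont.add continuous_const).continuousOn

lemma mul_cfc_inv_add_mul_star_le_abs_star (a : 𝒜) {ε : ℝ} (hε : 0 < ε) :
    a * cfc (fun t : ℝ => (t + ε)⁻¹) (CFC.abs a) * star a ≤ CFC.abs (star a) := by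
  set b := CFC.abs a
  set g := cfc (fun t : ℝ => (t + ε)⁻¹) b
  have hspec : ∀ t ∈ spectrum ℝ b, 0 ≤ t := fun t ht =>
    spectrum_nonneg_of_nonneg (CFC.abs_nonneg a) ht
  have hinv_cont : ContinuousOn (fun t : ℝ => (t + ε)⁻¹) (spectrum ℝ b) :=
    (continuous_id.add continuous_const).continuousOn.inv₀ fun t ht =>
      (by linarith [hspec t ht] : t + ε ≠ 0)
  have hsq_cont : ContinuousOn (fun t : ℝ => t ^ 2) (spectrum ℝ b) :=
    (continuous_pow 2).continuousOn
  have hg : 0 ≤ g := cfc_nonneg fun t ht => inv_nonneg.2 (by linarith [hspec t ht])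
  have hcontract : g * (star a * a) * g ≤ 1 := by
    rw [← CFC.abs_mul_abs, ← sq, ← cfc_pow_id (R := ℝ) b 2, ← cfc_mul _ _ b hinv_cont hsq_cont,
      ← cfc_mul _ _ b (hinv_cont.fun_mul hsq_cont) hinv_cont]
    refine cfc_le_one _ _ fun t ht => ?_
    have ht0 := hspec t ht
    calc (t + ε)⁻¹ * t ^ 2 * (t + ε)⁻¹ = (t / (t + ε)) ^ 2 := by ring
    _ ≤ 1 := pow_le_one₀ (by positivity) (div_le_one_of_le₀ (by linarith) (by positivity))
  have hsq : (a * g * star a) * (a * g * star a) ≤ a * star a := by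
    calc (a * g * star a) * (a * g * star a) = a * (g * (star a * a) * g) * star a := by
          simp only [mul_assoc]
    _ ≤ a * 1 * star a := star_right_conjugate_le_conjugate hcontract a
    _ = a * star a := by rw [mul_one]
  calc a * g * star a = CFC.sqrt ((a * g * star a) * (a * g * star a)) :=
        (CFC.sqrt_mul_self _ (star_right_conjugate_nonneg hg a)).symm
  _ ≤ CFC.sqrt (a * star a) := CFC.sqrt_le_sqrt _ _ hsq
  _ = CFC.abs (star a) := by rw [CFC.abs, star_star]

end CStarAlgebra

section InnerProductSpace

variable {𝕜 E : Type*} [RCLike 𝕜] [NormedAddCommGroup E] [InnerProductSpace 𝕜 E]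

lemma buzano_inequality (u v e : E) (he : ‖e‖ = 1) :
    2 * (‖⟪u, e⟫_𝕜‖ * ‖⟪e, v⟫_𝕜‖) ≤ ‖u‖ * ‖v‖ + ‖⟪u, v⟫_𝕜‖ := by
  set c := ⟪e, v⟫_𝕜
  have hreflect : ‖(2 * c) • e - v‖ = ‖v‖ := by
    have hre : re ⟪(2 * c) • e, v⟫_𝕜 = 2 * ‖c‖ ^ 2 := by
      rw [inner_smul_left, map_mul (starRingEnd 𝕜), mul_assoc, RCLike.conj_mul, map_ofNat]
      rw [← RCLike.ofReal_pow, ← RCLike.ofReal_ofNat, ← RCLike.ofReal_mul, RCLike.ofReal_re]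
    rw [← sq_eq_sq₀ (norm_nonneg _) (norm_nonneg _), norm_sub_sq (𝕜 := 𝕜), hre, norm_smul, he,
      norm_mul, RCLike.norm_two]
    ring
  calc 2 * (‖⟪u, e⟫_𝕜‖ * ‖c‖) = ‖⟪u, (2 * c) • e - v⟫_𝕜 + ⟪u, v⟫_𝕜‖ := by
        rw [inner_sub_right, inner_smul_right, sub_add_cancel, norm_mul, norm_mul, RCLike.norm_two]
        ring
  _ ≤ ‖⟪u, (2 * c) • e - v⟫_𝕜‖ + ‖⟪u, v⟫_𝕜‖ := norm_add_le _ _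
  _ ≤ ‖u‖ * ‖v‖ + ‖⟪u, v⟫_𝕜‖ := by
        gcongr
        rw [← hreflect]
        exact norm_inner_le_norm _ _

lemma re_inner_le_re_inner_of_le {S T : E →L[𝕜] E} (h : S ≤ T) (x : E) :
    re ⟪S x, x⟫_𝕜 ≤ re ⟪T x, x⟫_𝕜 := by
  simpa [inner_sub_left] using h.re_inner_nonneg_left x

lemma re_inner_nonneg_of_nonneg {T : E →L[𝕜] E} (hT : 0 ≤ T) (x : E) : 0 ≤ re ⟪T x, x⟫_𝕜 := by
  simpa using re_inner_le_re_inner_of_le hT x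

variable [CompleteSpace E]

lemma IsSelfAdjoint.norm_apply_sq {P : E →L[𝕜] E} (hP : IsSelfAdjoint P) (x : E) :
    ‖P x‖ ^ 2 = re ⟪(P * P) x, x⟫_𝕜 := by
  rw [apply_norm_sq_eq_inner_adjoint_left, ← star_eq_adjoint, hP.star_eq]
  rfl

lemma norm_inner_sq_le_of_mul_eq_one {u w : E →L[𝕜] E} (hu : IsSelfAdjoint u)
    (hw : IsSelfAdjoint w) (hwu : w * u = 1) (A : E →L[𝕜] E) (x y : E) :
    ‖⟪A x, y⟫_𝕜‖ ^ 2 ≤ re ⟪(u * u) x, x⟫_𝕜 * re ⟪(A * (w * w) * adjoint A) y, y⟫_𝕜 := by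
  have hadj : adjoint (A * w) = w * adjoint A := by
    rw [← star_eq_adjoint, ← star_eq_adjoint, star_mul, hw.star_eq, star_eq_adjoint]
  have hfactor : ⟪A x, y⟫_𝕜 = ⟪u x, (w * adjoint A) y⟫_𝕜 := by
    rw [← hadj, adjoint_inner_right, mul_apply_eq_comp, ← mul_apply_eq_comp w, hwu,
      one_apply_eq_self]
  have hwy : ‖(w * adjoint A) y‖ ^ 2 = re ⟪(A * (w * w) * adjoint A) y, y⟫_𝕜 := by
    have hadj' : adjoint (w * adjoint A) = A * w := by rw [← hadj, adjoint_adjoint]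
    rw [apply_norm_sq_eq_inner_adjoint_left, hadj']
    simp only [mul_assoc]
    rfl
  rw [hfactor, ← hu.norm_apply_sq, ← hwy, ← mul_pow]
  gcongr
  exact norm_inner_le_norm _ _

lemma re_inner_mul_re_inner_le {P Q : E →L[𝕜] E} (hP : IsSelfAdjoint P) (hQ : IsSelfAdjoint Q)
    {x : E} (hx : ‖x‖ = 1) :
    re ⟪P x, x⟫_𝕜 * re ⟪Q x, x⟫_𝕜 ≤
      1 / 4 * re ⟪(P * P + Q * Q) x, x⟫_𝕜 + 1 / 2 * ‖⟪(P * Q) x, x⟫_𝕜‖ := by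
  have hbuzano := buzano_inequality (𝕜 := 𝕜) (P x) (Q x) x hx
  have hre : re ⟪P x, x⟫_𝕜 * re ⟪Q x, x⟫_𝕜 ≤ ‖⟪P x, x⟫_𝕜‖ * ‖⟪Q x, x⟫_𝕜‖ := by
    calc re ⟪P x, x⟫_𝕜 * re ⟪Q x, x⟫_𝕜 ≤ |re ⟪P x, x⟫_𝕜| * |re ⟪Q x, x⟫_𝕜| := by
          rw [← abs_mul]; exact le_abs_self _
    _ ≤ _ := mul_le_mul (abs_re_le_norm _) (abs_re_le_norm _) (abs_nonneg _) (norm_nonneg _)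
  have hamgm : ‖P x‖ * ‖Q x‖ ≤ 1 / 2 * re ⟪(P * P + Q * Q) x, x⟫_𝕜 := by
    rw [add_apply, inner_add_left, map_add, ← hP.norm_apply_sq, ← hQ.norm_apply_sq]
    nlinarith [sq_nonneg (‖P x‖ - ‖Q x‖)]
  have hcross : ⟪P x, Q x⟫_𝕜 = ⟪x, (P * Q) x⟫_𝕜 := by
    rw [mul_apply_eq_comp, ← adjoint_inner_right, ← star_eq_adjoint, hP.star_eq]
  rw [hcross, norm_inner_symm x (Q x), norm_inner_symm x ((P * Q) x)] at hbuzano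
  linarith

end InnerProductSpace

section Operator

variable {H : Type*} [NormedAddCommGroup H] [InnerProductSpace ℂ H]

lemma re_inner_algebraMap_apply (c : ℝ) (x : H) :
    re ⟪algebraMap ℝ (H →L[ℂ] H) c x, x⟫_ℂ = c * ‖x‖ ^ 2 := by
  rw [Algebra.algebraMap_eq_smul_one, smul_apply, one_apply_eq_self,
    RCLike.real_smul_eq_coe_smul (K := ℂ), inner_smul_real_left, inner_self_eq_norm_sq_to_K]
  simp [← Complex.ofReal_pow]

lemma norm_inner_le_ber {Ω : Type*} (k : Ω → H) (hk : ∀ lam, ‖k lam‖ = 1) (T : H →L[ℂ] H)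
    (lam : Ω) : ‖⟪T (k lam), k lam⟫_ℂ‖ ≤ ber k T := by
  unfold ber
  refine le_ciSup (f := fun lam => ‖⟪T (k lam), k lam⟫_ℂ‖) ⟨‖T‖, ?_⟩ lam
  rintro _ ⟨μ, rfl⟩
  simpa [hk] using (norm_inner_le_norm (T (k μ)) (k μ)).trans
    (mul_le_mul_of_nonneg_right (T.le_opNorm _) (norm_nonneg _))

lemma ber_rpow_le {Ω : Type*} [Nonempty Ω] (k : Ω → H) (T : H →L[ℂ] H) {p M : ℝ} (hp : 0 < p)
    (h : ∀ lam, ‖⟪T (k lam), k lam⟫_ℂ‖ ^ p ≤ M) : ber k T ^ p ≤ M := by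
  have hM : 0 ≤ M := (Real.rpow_nonneg (norm_nonneg _) p).trans (h (Classical.arbitrary Ω))
  unfold ber
  rw [← Real.le_rpow_inv_iff_of_pos (Real.iSup_nonneg fun _ => norm_nonneg _) hM hp]
  exact ciSup_le fun lam => (Real.le_rpow_inv_iff_of_pos (norm_nonneg _) hM hp).2 (h lam)

variable [CompleteSpace H]

lemma opAbs_eq_abs (T : H →L[ℂ] H) : opAbs T = CFC.abs T := rfl

lemma rpow_re_inner_le_re_inner_rpow {T : H →L[ℂ] H} (hT : 0 ≤ T) {x : H} (hx : ‖x‖ = 1) {r : ℝ}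
    (hr : 1 ≤ r) : re ⟪T x, x⟫_ℂ ^ r ≤ re ⟪(T ^ r) x, x⟫_ℂ := by
  set s := re ⟪T x, x⟫_ℂ with hs_def
  have hs : 0 ≤ s := re_inner_nonneg_of_nonneg hT x
  have htangent := re_inner_le_re_inner_of_le (CFC.smul_le_rpow_add_algebraMap hT hr hs) x
  rw [add_apply, inner_add_left, map_add, re_inner_algebraMap_apply, hx, smul_apply,
    RCLike.real_smul_eq_coe_smul (K := ℂ), inner_smul_real_left] at htangent
  have hpow : s ^ (r - 1) * s = s ^ r := by
    rw [← Real.rpow_add_one' hs (by linarith), sub_add_cancel]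
  rw [RCLike.smul_re, ← hs_def, one_pow, mul_one, mul_assoc, hpow] at htangent
  linarith

lemma norm_inner_sq_le_re_inner_abs_add_mul (A : H →L[ℂ] H) {ε : ℝ} (hε : 0 < ε) (x y : H) :
    ‖⟪A x, y⟫_ℂ‖ ^ 2 ≤
      (re ⟪CFC.abs A x, x⟫_ℂ + ε * ‖x‖ ^ 2) * re ⟪CFC.abs (adjoint A) y, y⟫_ℂ := by
  set a := CFC.abs A
  have hspec : ∀ t ∈ spectrum ℝ a, 0 < t + ε := fun t ht => by
    linarith [spectrum_nonneg_of_nonneg (CFC.abs_nonneg A) ht]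
  set u := cfc (fun t : ℝ => √(t + ε)) a
  set w := cfc (fun t : ℝ => (√(t + ε))⁻¹) a
  have hsqrt : Continuous fun t : ℝ => √(t + ε) :=
    Real.continuous_sqrt.comp (continuous_id.add continuous_const)
  have hinv : ContinuousOn (fun t : ℝ => (√(t + ε))⁻¹) (spectrum ℝ a) :=
    hsqrt.continuousOn.inv₀ fun t ht => (Real.sqrt_pos.2 (hspec t ht)).ne'
  have hwu : w * u = 1 := by
    rw [← cfc_mul _ _ a hinv hsqrt.continuousOn, ← cfc_one ℝ a]
    exact cfc_congr fun t ht => inv_mul_cancel₀ (Real.sqrt_pos.2 (hspec t ht)).ne'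
  have huu : u * u = a + algebraMap ℝ _ ε := by
    calc u * u = cfc (fun t : ℝ => t + ε) a := by
          rw [← cfc_mul _ _ a hsqrt.continuousOn hsqrt.continuousOn]
          exact cfc_congr fun t ht => Real.mul_self_sqrt (hspec t ht).le
    _ = a + algebraMap ℝ _ ε := by rw [cfc_add_const _ _ a (continuousOn_id' _), cfc_id' ℝ a]
  have hww : w * w = cfc (fun t : ℝ => (t + ε)⁻¹) a := by
    rw [← cfc_mul _ _ a hinv hinv]
    exact cfc_congr fun t ht => by rw [← mul_inv, Real.mul_self_sqrt (hspec t ht).le]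
  calc ‖⟪A x, y⟫_ℂ‖ ^ 2 ≤ re ⟪(u * u) x, x⟫_ℂ * re ⟪(A * (w * w) * adjoint A) y, y⟫_ℂ :=
        norm_inner_sq_le_of_mul_eq_one (cfc_predicate _ a) (cfc_predicate _ a) hwu A x y
  _ ≤ (re ⟪a x, x⟫_ℂ + ε * ‖x‖ ^ 2) * re ⟪CFC.abs (adjoint A) y, y⟫_ℂ := by
      rw [huu, hww, add_apply, inner_add_left, map_add, re_inner_algebraMap_apply]
      have hle := mul_cfc_inv_add_mul_star_le_abs_star A hε
      rw [star_eq_adjoint] at hle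
      have := re_inner_nonneg_of_nonneg (CFC.abs_nonneg A) x
      exact mul_le_mul_of_nonneg_left (re_inner_le_re_inner_of_le hle y) (by positivity)

lemma norm_inner_sq_le_re_inner_abs_mul (A : H →L[ℂ] H) (x y : H) :
    ‖⟪A x, y⟫_ℂ‖ ^ 2 ≤ re ⟪CFC.abs A x, x⟫_ℂ * re ⟪CFC.abs (adjoint A) y, y⟫_ℂ := by
  set a := re ⟪CFC.abs A x, x⟫_ℂ
  set b := re ⟪CFC.abs (adjoint A) y, y⟫_ℂ
  have hcont : Continuous fun ε : ℝ => (a + ε * ‖x‖ ^ 2) * b := by fun_prop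
  have hlim := (hcont.tendsto 0).mono_left (nhdsWithin_le_nhds (s := Set.Ioi 0))
  rw [zero_mul, add_zero] at hlim
  exact ge_of_tendsto hlim (eventually_nhdsWithin_of_forall fun ε hε =>
    norm_inner_sq_le_re_inner_abs_add_mul A hε x y)

lemma norm_inner_rpow_le_re_inner_abs_rpow_mul (A : H →L[ℂ] H) {x : H} (hx : ‖x‖ = 1) {r : ℝ}
    (hr : 1 ≤ r) : ‖⟪A x, x⟫_ℂ‖ ^ (2 * r) ≤
      re ⟪(CFC.abs A ^ r) x, x⟫_ℂ * re ⟪(CFC.abs (adjoint A) ^ r) x, x⟫_ℂ := by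
  have hP := re_inner_nonneg_of_nonneg (CFC.abs_nonneg A) x
  have hQ := re_inner_nonneg_of_nonneg (CFC.abs_nonneg (adjoint A)) x
  calc ‖⟪A x, x⟫_ℂ‖ ^ (2 * r) = (‖⟪A x, x⟫_ℂ‖ ^ 2) ^ r := by
        rw [Real.rpow_mul (norm_nonneg _), Real.rpow_two]
  _ ≤ (re ⟪CFC.abs A x, x⟫_ℂ * re ⟪CFC.abs (adjoint A) x, x⟫_ℂ) ^ r := by
        gcongr
        exact norm_inner_sq_le_re_inner_abs_mul A x x
  _ = re ⟪CFC.abs A x, x⟫_ℂ ^ r * re ⟪CFC.abs (adjoint A) x, x⟫_ℂ ^ r := Real.mul_rpow hP hQ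
  _ ≤ _ := mul_le_mul (rpow_re_inner_le_re_inner_rpow (CFC.abs_nonneg A) hx hr)
        (rpow_re_inner_le_re_inner_rpow (CFC.abs_nonneg _) hx hr) (by positivity)
        (re_inner_nonneg_of_nonneg CFC.rpow_nonneg x)

end Operator

theorem berezin_power_inequality_product_abs
    {H : Type*} [NormedAddCommGroup H] [InnerProductSpace ℂ H] [CompleteSpace H]
    {Ω : Type*} [Nonempty Ω] (k : Ω → H) (hk : ∀ lam, ‖k lam‖ = 1)
    (A : H →L[ℂ] H) (r : ℝ) (hr : 1 ≤ r) :
    ber k A ^ (2 * r) ≤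
      (1 / 4 : ℝ) * ber k (CFC.rpow (opAbs A) (2 * r) + CFC.rpow (opAbs (adjoint A)) (2 * r))
        + (1 / 2 : ℝ) * ber k (CFC.rpow (opAbs A) r * CFC.rpow (opAbs (adjoint A)) r) := by
  simp only [CFC.rpow_eq_pow, opAbs_eq_abs]
  refine ber_rpow_le k A (by positivity) fun lam => ?_
  set P := CFC.abs A ^ r
  set Q := CFC.abs (adjoint A) ^ r
  have hP : IsSelfAdjoint P := .of_nonneg CFC.rpow_nonneg
  have hQ : IsSelfAdjoint Q := .of_nonneg CFC.rpow_nonneg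
  calc ‖⟪A (k lam), k lam⟫_ℂ‖ ^ (2 * r)
      ≤ re ⟪P (k lam), k lam⟫_ℂ * re ⟪Q (k lam), k lam⟫_ℂ :=
        norm_inner_rpow_le_re_inner_abs_rpow_mul A (hk lam) hr
  _ ≤ 1 / 4 * re ⟪(P * P + Q * Q) (k lam), k lam⟫_ℂ + 1 / 2 * ‖⟪(P * Q) (k lam), k lam⟫_ℂ‖ :=
        re_inner_mul_re_inner_le hP hQ (hk lam)
  _ ≤ _ := by
        rw [CFC.rpow_mul_rpow_self (CFC.abs_nonneg A) (by linarith),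
          CFC.rpow_mul_rpow_self (CFC.abs_nonneg _) (by linarith)]
        gcongr
        · exact (re_le_norm _).trans (norm_inner_le_ber k hk _ lam)
        · exact norm_inner_le_ber k hk _ lam
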